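/- In the joint-density setup for (U, W, A): assume W ⟂ A | U holds in density form, pU(u) > 0 for μ-almost every u, pUA(u,a) > 0 for (μ⊗α)-almost every (u,a), and pWA(w,a) > 0 for (ν⊗α)-almost every (w,a). Then for α-almost every a the following holds: for every bounded measurable ℓ : W → ℝ such that ∫ ℓ(w) h(u,w,a) dν(w) = 0 for μ-almost every u (i.e. E[ℓ(W) | U, A = a] = 0), one has ∫ ℓ(w) · r_a(w) · pWA(w,a) dν(w) = 0, where r_a(w) = pW(w)·pA(a)/pWA(w,a). That is, the density ratio r_a is orthogonal in L²(p_{W|A=a}) to every such ℓ. -/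

import Mathlib

open MeasureTheory

/-!
By conditional independence, `pUW(u, ·) = (pU(u) / pUA(u, a)) · h(u, ·, a)` for a.e. `u`, so
`E[ℓ(W) | U, A = a] = 0` forces `∫ ℓ(w) pUW(u, w) dν(w) = 0` for a.e. `u`. Integrating over `u`
(Fubini) gives `∫ ℓ pW dν = 0`, and where `pWA(·, a) > 0` the integrand
`ℓ · r_a · pWA(·, a)` is just `pA(a) · ℓ · pW`.
-/

section Slicing

variable {X Y Z : Type*} [MeasurableSpace X] [MeasurableSpace Y] [MeasurableSpace Z]
  {μ : Measure X} {ν : Measure Y} {ρ : Measure Z}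

theorem ae_ae_of_ae_prod_swap [SFinite μ] [SFinite ν] {p : X × Y → Prop}
    (h : ∀ᵐ z ∂μ.prod ν, p z) : ∀ᵐ y ∂ν, ∀ᵐ x ∂μ, p (x, y) :=
  Measure.ae_ae_of_ae_prod (Measure.measurePreserving_swap.quasiMeasurePreserving.ae h)

theorem ae_ae_ae_of_ae_prod_prod [SFinite μ] [SFinite ν] [SFinite ρ] {p : X × Y × Z → Prop}
    (h : ∀ᵐ x ∂μ.prod (ν.prod ρ), p x) : ∀ᵐ c ∂ρ, ∀ᵐ a ∂μ, ∀ᵐ b ∂ν, p (a, b, c) := by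
  have hrot : MeasurePreserving (fun z : Z × X × Y => (z.2.1, z.2.2, z.1))
      (ρ.prod (μ.prod ν)) (μ.prod (ν.prod ρ)) :=
    (measurePreserving_prodAssoc μ ν ρ).comp Measure.measurePreserving_swap
  filter_upwards [Measure.ae_ae_of_ae_prod (hrot.quasiMeasurePreserving.ae h)] with c hc
  exact Measure.ae_ae_of_ae_prod hc

end Slicing

section Fubini

variable {X Y Z E : Type*} [MeasurableSpace X] [MeasurableSpace Y] [MeasurableSpace Z]
  {μ : Measure X} {ν : Measure Y} {ρ : Measure Z} [SFinite μ] [SFinite ν] [SFinite ρ]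
  [NormedAddCommGroup E] [NormedSpace ℝ E] {F : X × Y × Z → E}

theorem integral_prod_prod (hF : Integrable F (μ.prod (ν.prod ρ))) :
    ∫ x, F x ∂μ.prod (ν.prod ρ) = ∫ a, ∫ b, ∫ c, F (a, b, c) ∂ρ ∂ν ∂μ := by
  rw [integral_prod _ hF]
  refine integral_congr_ae ?_
  filter_upwards [hF.prod_right_ae] with a ha using integral_prod _ ha

theorem integral_prod_prod_rotate (hF : Integrable F (μ.prod (ν.prod ρ))) :
    ∫ x, F x ∂μ.prod (ν.prod ρ) = ∫ b, ∫ c, ∫ a, F (a, b, c) ∂μ ∂ρ ∂ν := by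
  rw [integral_prod_symm _ hF, integral_prod _ hF.integral_prod_right]

end Fubini

theorem integral_eq_zero_of_ae_mul_eq_mul {X 𝕜 : Type*} [MeasurableSpace X] [RCLike 𝕜]
    {μ : Measure X} {f g : X → 𝕜} {c d : 𝕜} (hd : d ≠ 0)
    (hfg : ∀ᵐ x ∂μ, f x * c = g x * d) (hf : ∫ x, f x ∂μ = 0) : ∫ x, g x ∂μ = 0 := by
  have hg : g =ᵐ[μ] fun x => f x * (c / d) := by
    filter_upwards [hfg] with x hx
    rw [← mul_div_assoc, hx, mul_div_cancel_right₀ _ hd]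
  rw [integral_congr_ae hg, integral_mul_const, hf, zero_mul]

theorem ate_density_ratio_orthogonal_general
    {U W A : Type*} [MeasurableSpace U] [MeasurableSpace W] [MeasurableSpace A]
    (μ : Measure U) (ν : Measure W) (α : Measure A)
    [SigmaFinite μ] [SigmaFinite ν] [SigmaFinite α]
    (h : U × W × A → ℝ)
    (h_int : Integrable h (μ.prod (ν.prod α)))
    (pU : U → ℝ)
    (pW : W → ℝ) (hpW : ∀ w, pW w = ∫ a, ∫ u, h (u, w, a) ∂μ ∂α)
    (pA : A → ℝ)
    (pUW : U × W → ℝ) (hpUW : ∀ u w, pUW (u, w) = ∫ a, h (u, w, a) ∂α)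
    (pUA : U × A → ℝ)
    (pWA : W × A → ℝ)
    (ci : ∀ᵐ x ∂μ.prod (ν.prod α), h x * pU x.1 = pUW (x.1, x.2.1) * pUA (x.1, x.2.2))
    (hpUA_pos : ∀ᵐ x ∂μ.prod α, 0 < pUA x)
    (hpWA_pos : ∀ᵐ x ∂ν.prod α, 0 < pWA x) :
    ∀ᵐ a ∂α, ∀ ℓ : W → ℝ, Measurable ℓ → (∃ C, ∀ w, |ℓ w| ≤ C) →
      (∀ᵐ u ∂μ, ∫ w, ℓ w * h (u, w, a) ∂ν = 0) →
      ∫ w, ℓ w * (pW w * pA a / pWA (w, a)) * pWA (w, a) ∂ν = 0 := by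
  filter_upwards [ae_ae_ae_of_ae_prod_prod ci, ae_ae_of_ae_prod_swap hpUA_pos,
    ae_ae_of_ae_prod_swap hpWA_pos] with a hci hpUA_a hpWA_a
  rintro ℓ hℓ ⟨C, hC⟩ hℓh
  have hF : Integrable (fun x : U × W × A => ℓ x.2.1 * h x) (μ.prod (ν.prod α)) :=
    h_int.bdd_mul (hℓ.comp (measurable_fst.comp measurable_snd)).aestronglyMeasurable
      (ae_of_all _ fun x => hC x.2.1)
  have hℓpUW : ∀ᵐ u ∂μ, ∫ w, ℓ w * pUW (u, w) ∂ν = 0 := by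
    filter_upwards [hci, hpUA_a, hℓh] with u hci_u hpUA_u hℓh_u
    refine integral_eq_zero_of_ae_mul_eq_mul (c := pU u) hpUA_u.ne' ?_ hℓh_u
    filter_upwards [hci_u] with w hw
    rw [mul_assoc, hw, mul_assoc]
  have hℓpW : ∫ w, ℓ w * pW w ∂ν = 0 := calc
    ∫ w, ℓ w * pW w ∂ν = ∫ x, ℓ x.2.1 * h x ∂μ.prod (ν.prod α) := by
      simp_rw [integral_prod_prod_rotate hF, integral_const_mul, hpW]
    _ = ∫ u, ∫ w, ℓ w * pUW (u, w) ∂ν ∂μ := by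
      simp_rw [integral_prod_prod hF, integral_const_mul, hpUW]
    _ = 0 := by rw [integral_congr_ae hℓpUW, integral_zero]
  calc ∫ w, ℓ w * (pW w * pA a / pWA (w, a)) * pWA (w, a) ∂ν
      = ∫ w, ℓ w * pW w * pA a ∂ν := by
        refine integral_congr_ae ?_
        filter_upwards [hpWA_a] with w hw
        field_simp
    _ = 0 := by rw [integral_mul_const, hℓpW, zero_mul]

/-- The ATE density ratio `r_a(w) = pW(w)·pA(a)/pWA(w,a)` is orthogonal in
`L²(p_{W|A=a})` to every bounded measurable `ℓ` with `E[ℓ(W) | U, A = a] = 0`, for α-a.e. `a`,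
in the joint-density setup for `(U, W, A)` with `W ⟂ A | U` and positivity of the involved
densities. -/
theorem ate_density_ratio_orthogonal
    {U W A : Type*} [MeasurableSpace U] [MeasurableSpace W] [MeasurableSpace A]
    (μ : Measure U) (ν : Measure W) (α : Measure A)
    [SigmaFinite μ] [SigmaFinite ν] [SigmaFinite α]
    (h : U × W × A → ℝ) (h_meas : Measurable h) (h_nonneg : ∀ x, 0 ≤ h x)
    (h_int : Integrable h (μ.prod (ν.prod α)))
    (pU : U → ℝ) (hpU : ∀ u, pU u = ∫ a, ∫ w, h (u, w, a) ∂ν ∂α)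
    (pW : W → ℝ) (hpW : ∀ w, pW w = ∫ a, ∫ u, h (u, w, a) ∂μ ∂α)
    (pA : A → ℝ) (hpA : ∀ a, pA a = ∫ w, ∫ u, h (u, w, a) ∂μ ∂ν)
    (pUW : U × W → ℝ) (hpUW : ∀ u w, pUW (u, w) = ∫ a, h (u, w, a) ∂α)
    (pUA : U × A → ℝ) (hpUA : ∀ u a, pUA (u, a) = ∫ w, h (u, w, a) ∂ν)
    (pWA : W × A → ℝ) (hpWA : ∀ w a, pWA (w, a) = ∫ u, h (u, w, a) ∂μ)
    (ci : ∀ᵐ x ∂μ.prod (ν.prod α), h x * pU x.1 = pUW (x.1, x.2.1) * pUA (x.1, x.2.2))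
    (hpU_pos : ∀ᵐ u ∂μ, 0 < pU u)
    (hpUA_pos : ∀ᵐ x ∂μ.prod α, 0 < pUA x)
    (hpWA_pos : ∀ᵐ x ∂ν.prod α, 0 < pWA x) :
    ∀ᵐ a ∂α, ∀ ℓ : W → ℝ, Measurable ℓ → (∃ C, ∀ w, |ℓ w| ≤ C) →
      (∀ᵐ u ∂μ, ∫ w, ℓ w * h (u, w, a) ∂ν = 0) →
      ∫ w, ℓ w * (pW w * pA a / pWA (w, a)) * pWA (w, a) ∂ν = 0 :=
  ate_density_ratio_orthogonal_general μ ν α h h_int pU pW hpW pA pUW hpUW pUA pWA ci hpUA_pos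
    hpWA_pos
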